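/- Under assumptions (A1) and (A2), the Riccati terminal value problem admits exactly one solution P : [0,T] → ℝ^n; moreover there exists a constant C, depending only on n, K and T, such that |P_t| ≤ C for all t ∈ [0,T]. -/

import Mathlib

open MeasureTheory Set

noncomputable section

/-- Assumption (A1) of the paper: measurability, boundedness (by `K`) and
`K`-Lipschitz continuity of all the coefficients. -/
structure A1 (n d : ℕ) (T K : ℝ)
    (b1 : ℝ → ℝ) (b2 : ℝ → Fin n → ℝ) (f1 : ℝ → Fin n → ℝ)
    (f2 : ℝ → Matrix (Fin n) (Fin n) ℝ)
    (s1 : ℝ → Fin d → ℝ) (s2 : ℝ → Matrix (Fin n) (Fin d) ℝ) (sg : ℝ → Fin d → ℝ)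
    (h1 : Fin n → ℝ) (b0 : ℝ → ℝ → (Fin n → ℝ) → ℝ)
    (f0 : ℝ → ℝ → (Fin n → ℝ) → Fin n → ℝ)
    (s0 : ℝ → ℝ → (Fin n → ℝ) → Fin d → ℝ) (h2 : ℝ → Fin n → ℝ) : Prop where
  meas_b1 : Measurable b1
  meas_b2 : Measurable b2
  meas_f1 : Measurable f1
  meas_f2 : ∀ i j, Measurable fun t => f2 t i j
  meas_s1 : Measurable s1
  meas_s2 : ∀ i k, Measurable fun t => s2 t i k
  meas_sg : Measurable sg
  meas_b0 : ∀ (x : ℝ) (y : Fin n → ℝ), Measurable fun t => b0 t x y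
  meas_f0 : ∀ (x : ℝ) (y : Fin n → ℝ), Measurable fun t => f0 t x y
  meas_s0 : ∀ (x : ℝ) (y : Fin n → ℝ), Measurable fun t => s0 t x y
  bdd_b1 : ∀ t ∈ Icc (0 : ℝ) T, |b1 t| ≤ K
  bdd_b2 : ∀ t ∈ Icc (0 : ℝ) T, ‖b2 t‖ ≤ K
  bdd_f1 : ∀ t ∈ Icc (0 : ℝ) T, ‖f1 t‖ ≤ K
  bdd_f2 : ∀ t ∈ Icc (0 : ℝ) T, ∀ i j, |f2 t i j| ≤ K
  bdd_s1 : ∀ t ∈ Icc (0 : ℝ) T, ‖s1 t‖ ≤ K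
  bdd_s2 : ∀ t ∈ Icc (0 : ℝ) T, ∀ i k, |s2 t i k| ≤ K
  bdd_sg : ∀ t ∈ Icc (0 : ℝ) T, ‖sg t‖ ≤ K
  bdd_h1 : ‖h1‖ ≤ K
  lip_b0 : ∀ t ∈ Icc (0 : ℝ) T, ∀ (x x' : ℝ) (y y' : Fin n → ℝ),
    |b0 t x y - b0 t x' y'| ≤ K * (|x - x'| + ‖y - y'‖)
  lip_f0 : ∀ t ∈ Icc (0 : ℝ) T, ∀ (x x' : ℝ) (y y' : Fin n → ℝ),
    ‖f0 t x y - f0 t x' y'‖ ≤ K * (|x - x'| + ‖y - y'‖)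
  lip_s0 : ∀ t ∈ Icc (0 : ℝ) T, ∀ (x x' : ℝ) (y y' : Fin n → ℝ),
    ‖s0 t x y - s0 t x' y'‖ ≤ K * (|x - x'| + ‖y - y'‖)
  lip_h2 : ∀ x x' : ℝ, ‖h2 x - h2 x'‖ ≤ K * |x - x'|
  bdd_b0 : ∀ t ∈ Icc (0 : ℝ) T, |b0 t 0 0| ≤ K
  bdd_f0 : ∀ t ∈ Icc (0 : ℝ) T, ‖f0 t 0 0‖ ≤ K
  bdd_s0 : ∀ t ∈ Icc (0 : ℝ) T, ‖s0 t 0 0‖ ≤ K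
  bdd_h2 : ‖h2 0‖ ≤ K

/-- Assumption (A2): the sign/monotonicity conditions, case (i) or case (ii). -/
def A2 (n : ℕ) (T : ℝ) (b2 f1 : ℝ → Fin n → ℝ) (f2 : ℝ → Matrix (Fin n) (Fin n) ℝ)
    (h1 : Fin n → ℝ) : Prop :=
  (∀ t ∈ Icc (0 : ℝ) T,
      (∀ i, 0 ≤ f1 t i) ∧ (∀ i, 0 ≤ h1 i) ∧ (∀ i, b2 t i ≤ 0) ∧
        ∀ i j, i ≠ j → 0 ≤ f2 t i j) ∨
  (∀ t ∈ Icc (0 : ℝ) T,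
      (∀ i, f1 t i ≤ 0) ∧ (∀ i, h1 i ≤ 0) ∧ (∀ i, 0 ≤ b2 t i) ∧
        ∀ i j, i ≠ j → 0 ≤ f2 t i j)

/-- A solution of the Riccati terminal value problem: a continuous map `P : [0,T] → ℝⁿ`
with `P t = h1 + ∫_t^T [(b2(s)·P_s) P_s + f2(s) P_s + b1(s) P_s + f1(s)] ds`. -/
def IsRiccatiSolution (n : ℕ) (T : ℝ) (b1 : ℝ → ℝ) (b2 f1 : ℝ → Fin n → ℝ)
    (f2 : ℝ → Matrix (Fin n) (Fin n) ℝ) (h1 : Fin n → ℝ) (P : ℝ → Fin n → ℝ) : Prop :=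
  ContinuousOn P (Icc 0 T) ∧
    ∀ t ∈ Icc (0 : ℝ) T,
      P t = h1 + ∫ s in t..T,
        ((∑ i, b2 s i * P s i) • P s + (f2 s).mulVec (P s) + b1 s • P s + f1 s)

namespace RiccatiAux


/-- Radial truncation onto the ball of radius `R`. -/
def projB {n : ℕ} (R : ℝ) (y : Fin n → ℝ) : Fin n → ℝ := (min 1 (R / ‖y‖)) • y

variable {n : ℕ} {R : ℝ}

lemma projB_coef_nonneg (hR : 0 ≤ R) (y : Fin n → ℝ) : 0 ≤ min 1 (R / ‖y‖) :=
  le_min zero_le_one (div_nonneg hR (norm_nonneg _))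

lemma projB_coef_le_one (y : Fin n → ℝ) : min 1 (R / ‖y‖) ≤ 1 := min_le_left _ _

lemma norm_projB_le (hR : 0 ≤ R) (y : Fin n → ℝ) : ‖projB R y‖ ≤ R := by
  rcases eq_or_ne y 0 with rfl | hy
  · simp [projB, hR]
  · have hy' : 0 < ‖y‖ := norm_pos_iff.2 hy
    rw [projB, norm_smul, Real.norm_eq_abs, abs_of_nonneg (projB_coef_nonneg hR y)]
    calc min 1 (R / ‖y‖) * ‖y‖ ≤ (R / ‖y‖) * ‖y‖ := by
          exact mul_le_mul_of_nonneg_right (min_le_right _ _) hy'.le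
      _ = R := by field_simp

lemma norm_projB_le_norm (hR : 0 ≤ R) (y : Fin n → ℝ) : ‖projB R y‖ ≤ ‖y‖ := by
  rw [projB, norm_smul, Real.norm_eq_abs, abs_of_nonneg (projB_coef_nonneg hR y)]
  calc min 1 (R / ‖y‖) * ‖y‖ ≤ 1 * ‖y‖ :=
        mul_le_mul_of_nonneg_right (projB_coef_le_one y) (norm_nonneg _)
    _ = ‖y‖ := one_mul _

lemma projB_eq_of_le (h : ‖y‖ ≤ R) : projB R y = y := by
  rcases eq_or_ne y 0 with rfl | hy
  · simp [projB]
  · have hy' : 0 < ‖y‖ := norm_pos_iff.2 hy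
    have : min 1 (R / ‖y‖) = 1 := min_eq_left ((one_le_div hy').2 h)
    rw [projB, this, one_smul]

lemma projB_lip_aux (hR : 0 ≤ R) {y z : Fin n → ℝ} (h : ‖z‖ ≤ ‖y‖) :
    ‖projB R y - projB R z‖ ≤ 2 * ‖y - z‖ := by
  set cy := min 1 (R / ‖y‖) with hcy
  set cz := min 1 (R / ‖z‖) with hcz
  have hdecomp : projB R y - projB R z = cy • (y - z) + (cy - cz) • z := by
    simp [projB, ← hcy, ← hcz, smul_sub, sub_smul]
  have h1 : ‖cy • (y - z)‖ ≤ ‖y - z‖ := by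
    rw [norm_smul, Real.norm_eq_abs, abs_of_nonneg (projB_coef_nonneg hR y)]
    simpa using mul_le_mul_of_nonneg_right (projB_coef_le_one y) (norm_nonneg (y - z))
  have h2 : ‖(cy - cz) • z‖ ≤ ‖y - z‖ := by
    rw [norm_smul, Real.norm_eq_abs]
    rcases eq_or_lt_of_le (norm_nonneg z) with hz0 | hz0
    · rw [← hz0]; simpa using norm_nonneg (y - z)
    · have hyz : ‖y‖ - ‖z‖ ≤ ‖y - z‖ := norm_sub_norm_le y z
      have hy0 : 0 < ‖y‖ := lt_of_lt_of_le hz0 h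
      have hcle : cy ≤ cz := by
        apply min_le_min le_rfl
        rw [div_le_div_iff₀ hy0 hz0]
        exact mul_le_mul_of_nonneg_left h hR
      have habs : |cy - cz| = cz - cy := by rw [abs_sub_comm, abs_of_nonneg (by linarith)]
      rw [habs]
      have key : (cz - cy) * ‖z‖ ≤ ‖y‖ - ‖z‖ := by
        rcases le_or_gt 1 (R / ‖y‖) with h1y | h1y
        · have : cy = 1 := min_eq_left h1y
          have : cz = 1 := min_eq_left (le_trans h1y (by
            rw [div_le_div_iff₀ hy0 hz0]; exact mul_le_mul_of_nonneg_left h hR))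
          simp [‹cy = 1›, this]
          linarith
        · have hcyv : cy = R / ‖y‖ := min_eq_right h1y.le
          have hRy : R ≤ ‖y‖ := by
            rw [div_lt_one hy0] at h1y; exact h1y.le
          rcases le_or_gt 1 (R / ‖z‖) with h1z | h1z
          · have hczv : cz = 1 := min_eq_left h1z
            have hzR : ‖z‖ ≤ R := by rwa [le_div_iff₀ hz0, one_mul] at h1z
            rw [hczv, hcyv]
            have e : (1 - R / ‖y‖) * ‖z‖ = ‖z‖ * (‖y‖ - R) / ‖y‖ := by field_simp
            rw [e, div_le_iff₀ hy0]
            nlinarith [sq_nonneg (‖y‖ - ‖z‖), mul_nonneg hz0.le (sub_nonneg.2 hzR)]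
          · have hczv : cz = R / ‖z‖ := min_eq_right h1z.le
            rw [hczv, hcyv]
            have e : (R / ‖z‖ - R / ‖y‖) * ‖z‖ = (R / ‖y‖) * (‖y‖ - ‖z‖) := by
              field_simp
            rw [e]
            exact mul_le_of_le_one_left (by linarith) (by rw [div_le_one hy0]; exact hRy)
      exact key.trans hyz
  calc ‖projB R y - projB R z‖ ≤ ‖cy • (y - z)‖ + ‖(cy - cz) • z‖ := by
        rw [hdecomp]; exact norm_add_le _ _
    _ ≤ 2 * ‖y - z‖ := by linarith

lemma projB_lip (hR : 0 ≤ R) (y z : Fin n → ℝ) :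
    ‖projB R y - projB R z‖ ≤ 2 * ‖y - z‖ := by
  rcases le_total ‖z‖ ‖y‖ with h | h
  · exact projB_lip_aux hR h
  · rw [norm_sub_rev, norm_sub_rev y z]; exact projB_lip_aux hR h

lemma projB_lipschitzWith (hR : 0 ≤ R) : LipschitzWith 2 (projB (n := n) R) :=
  LipschitzWith.of_dist_le_mul fun y z => by
    rw [dist_eq_norm, dist_eq_norm]; simpa using projB_lip hR y z



variable {n : ℕ}

lemma intInt {g : ℝ → Fin n → ℝ} (hg : Measurable g) {B : ℝ} (hB : ∀ s, ‖g s‖ ≤ B)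
    (a b : ℝ) : IntervalIntegrable g volume a b := by
  rw [intervalIntegrable_iff]
  refine Integrable.mono' (g := fun _ => B) ?_ (hg.aestronglyMeasurable.restrict) ?_
  · exact integrableOn_const measure_Ioc_lt_top.ne enorm_ne_top
  · exact ae_of_all _ hB

lemma intIntR {g : ℝ → ℝ} (hg : Measurable g) {B : ℝ} (hB : ∀ s, |g s| ≤ B)
    (a b : ℝ) : IntervalIntegrable g volume a b := by
  rw [intervalIntegrable_iff]
  refine Integrable.mono' (g := fun _ => B) ?_ (hg.aestronglyMeasurable.restrict) ?_
  · exact integrableOn_const measure_Ioc_lt_top.ne enorm_ne_top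
  · exact ae_of_all _ hB

lemma intervalIntegral_apply {f : ℝ → Fin n → ℝ} {a b : ℝ}
    (hf : IntervalIntegrable f volume a b) (i : Fin n) :
    (∫ s in a..b, f s) i = ∫ s in a..b, f s i := by
  have := (ContinuousLinearMap.proj (R := ℝ) (φ := fun _ : Fin n => ℝ) i).intervalIntegral_comp_comm hf
  simpa [ContinuousLinearMap.proj_apply] using this.symm

lemma key_int (L c : ℝ) (k : ℕ) (t T : ℝ) :
    ∫ s in t..T, L * ((L * (T - s)) ^ k / (Nat.factorial k) * c) =
      (L * (T - t)) ^ (k + 1) / (Nat.factorial (k + 1)) * c := by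
  have h1 : ∀ s : ℝ, L * ((L * (T - s)) ^ k / (Nat.factorial k) * c) =
      (L ^ (k+1) / (Nat.factorial k) * c) * (T - s) ^ k := by
    intro s; rw [mul_pow]; ring
  simp only [h1]
  rw [intervalIntegral.integral_const_mul]
  rw [intervalIntegral.integral_comp_sub_left (fun x => x ^ k) T]
  rw [integral_pow]
  have hfac : (Nat.factorial (k+1) : ℝ) = (k+1) * (Nat.factorial k) := by
    rw [Nat.factorial_succ]; push_cast; ring
  have hk0 : (Nat.factorial k : ℝ) ≠ 0 := Nat.cast_ne_zero.2 (Nat.factorial_ne_zero k)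
  have hk1 : ((k : ℝ) + 1) ≠ 0 := by positivity
  rw [mul_pow, hfac]
  simp only [sub_self, ne_eq]
  field_simp
  ring

/-- Backward Grönwall inequality in integral form. -/
lemma gronwall {T L a : ℝ} (hT : 0 ≤ T) (hL : 0 ≤ L) (ha : 0 ≤ a) {u : ℝ → ℝ}
    (hu : ContinuousOn u (Icc 0 T))
    (hineq : ∀ t ∈ Icc (0:ℝ) T, u t ≤ a + ∫ s in t..T, L * u s) :
    ∀ t ∈ Icc (0:ℝ) T, u t ≤ a * Real.exp (L * T) := by
  obtain ⟨B, hB⟩ := isCompact_Icc.exists_bound_of_continuousOn hu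
  have hB' : ∀ t ∈ Icc (0:ℝ) T, u t ≤ B := fun t ht => (le_abs_self _).trans (hB t ht)
  have huint : ∀ t ∈ Icc (0:ℝ) T, IntervalIntegrable (fun s => L * u s) volume t T := by
    intro t ht
    apply ContinuousOn.intervalIntegrable
    rw [uIcc_of_le ht.2]
    exact (continuousOn_const.mul (hu.mono (Icc_subset_Icc ht.1 le_rfl)))
  set gfun : ℕ → ℝ → ℝ := fun k s => (L * (T - s)) ^ k / (Nat.factorial k) with hgfun
  have hgc : ∀ k, Continuous (gfun k) := by
    intro k; apply Continuous.div_const; exact (continuous_const.mul (continuous_const.sub continuous_id)).pow k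
  have claim : ∀ m, ∀ t ∈ Icc (0:ℝ) T,
      u t ≤ a * (∑ k ∈ Finset.range m, gfun k t) + B * gfun m t := by
    intro m
    induction m with
    | zero => intro t ht; simpa [hgfun] using hB' t ht
    | succ m ih =>
      intro t ht
      have hmono : ∫ s in t..T, L * u s ≤
          ∫ s in t..T, L * (a * (∑ k ∈ Finset.range m, gfun k s) + B * gfun m s) := by
        apply intervalIntegral.integral_mono_on ht.2 (huint t ht)
        · exact ((continuous_const.mul ((continuous_const.mul
            (continuous_finset_sum _ fun k _ => hgc k)).add
            (continuous_const.mul (hgc m))))).intervalIntegrable _ _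
        · intro s hs
          have hs' : s ∈ Icc (0:ℝ) T := ⟨ht.1.trans hs.1, hs.2⟩
          exact mul_le_mul_of_nonneg_left (ih s hs') hL
      have hre : ∀ s : ℝ, L * (a * (∑ k ∈ Finset.range m, gfun k s) + B * gfun m s) =
          (∑ k ∈ Finset.range m, L * (gfun k s * a)) + L * (gfun m s * B) := by
        intro s
        rw [mul_add]
        congr 1
        · rw [← mul_assoc, Finset.mul_sum]
          apply Finset.sum_congr rfl; intro k _; ring
        · ring
      have hsplit : ∫ s in t..T, L * (a * (∑ k ∈ Finset.range m, gfun k s) + B * gfun m s) =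
          (∑ k ∈ Finset.range m, gfun (k+1) t * a) + gfun (m+1) t * B := by
        have hik : ∀ k : ℕ, ∀ c : ℝ, IntervalIntegrable (fun s => L * (gfun k s * c)) volume t T :=
          fun k c => (continuous_const.mul ((hgc k).mul continuous_const)).intervalIntegrable _ _
        have hisum : IntervalIntegrable (fun s => ∑ k ∈ Finset.range m, L * (gfun k s * a)) volume t T :=
          (continuous_finset_sum _ fun k _ =>
            (continuous_const.mul ((hgc k).mul continuous_const))).intervalIntegrable _ _
        simp only [hre]
        rw [intervalIntegral.integral_add hisum (hik m B),
          intervalIntegral.integral_finset_sum (fun k _ => hik k a)]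
        congr 1
        · apply Finset.sum_congr rfl; intro k _
          simpa [hgfun] using key_int L a k t T
        · simpa [hgfun] using key_int L B m t T
      have hsum : a + ∑ k ∈ Finset.range m, gfun (k+1) t * a =
          a * ∑ k ∈ Finset.range (m+1), gfun k t := by
        rw [Finset.sum_range_succ' (fun k => gfun k t) m, mul_add, Finset.mul_sum]
        have h0 : gfun 0 t = 1 := by simp [hgfun]
        rw [h0, mul_one, add_comm]
        congr 1
        apply Finset.sum_congr rfl; intro k _; ring
      calc u t ≤ a + ∫ s in t..T, L * u s := hineq t ht
        _ ≤ a + ((∑ k ∈ Finset.range m, gfun (k+1) t * a) + gfun (m+1) t * B) := by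
            rw [← hsplit]; linarith
        _ = a * (∑ k ∈ Finset.range (m+1), gfun k t) + B * gfun (m+1) t := by
            rw [← add_assoc, hsum]; ring
  intro t ht
  have hsumle : ∀ m, a * (∑ k ∈ Finset.range m, gfun k t) ≤ a * Real.exp (L * T) := by
    intro m
    apply mul_le_mul_of_nonneg_left _ ha
    have hx : 0 ≤ L * (T - t) := mul_nonneg hL (sub_nonneg.2 ht.2)
    calc ∑ k ∈ Finset.range m, gfun k t ≤ Real.exp (L * (T - t)) :=
          Real.sum_le_exp_of_nonneg hx m
      _ ≤ Real.exp (L * T) := by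
          apply Real.exp_le_exp.2
          have := ht.1; nlinarith
  have htend : Filter.Tendsto (fun m => B * gfun m t) Filter.atTop (nhds 0) := by
    have := FloorSemiring.tendsto_pow_div_factorial_atTop (K := ℝ) (L * (T - t))
    simpa [hgfun] using this.const_mul B
  have : u t - a * Real.exp (L * T) ≤ 0 := by
    apply ge_of_tendsto' htend
    intro m
    have := claim m t ht
    have := hsumle m
    linarith
  linarith


/-- The truncated Riccati vector field. -/
def Ffield (R : ℝ) (b1 : ℝ → ℝ) (b2 f1 : ℝ → Fin n → ℝ)
    (f2 : ℝ → Matrix (Fin n) (Fin n) ℝ) (s : ℝ) (y : Fin n → ℝ) : Fin n → ℝ :=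
  (∑ j, b2 s j * projB R y j) • projB R y + (f2 s).mulVec (projB R y)
    + b1 s • projB R y + f1 s

def Gfield (T R : ℝ) (b1 : ℝ → ℝ) (b2 f1 : ℝ → Fin n → ℝ)
    (f2 : ℝ → Matrix (Fin n) (Fin n) ℝ) (s : ℝ) (y : Fin n → ℝ) : Fin n → ℝ :=
  if s ∈ Icc (0:ℝ) T then Ffield R b1 b2 f1 f2 s y else 0

variable {T K R : ℝ} {b1 : ℝ → ℝ} {b2 f1 : ℝ → Fin n → ℝ}
  {f2 : ℝ → Matrix (Fin n) (Fin n) ℝ}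

lemma Ffield_apply (s : ℝ) (y : Fin n → ℝ) (i : Fin n) :
    Ffield R b1 b2 f1 f2 s y i =
      (∑ j, b2 s j * projB R y j) * projB R y i + (∑ j, f2 s i j * projB R y j)
        + b1 s * projB R y i + f1 s i := by
  simp [Ffield, Matrix.mulVec, dotProduct]

lemma absSum {g : Fin n → ℝ} {C : ℝ} (h : ∀ j, |g j| ≤ C) : |∑ j, g j| ≤ n * C := by
  calc |∑ j, g j| ≤ ∑ j, |g j| := Finset.abs_sum_le_sum_abs _ _
    _ ≤ n * C := by
        have := Finset.sum_le_card_nsmul Finset.univ (fun j => |g j|) C (fun j _ => h j)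
        simpa [mul_comm] using this

/-- Componentwise facts used repeatedly. -/
lemma abs_comp_le (hR : 0 ≤ R) (y : Fin n → ℝ) (j : Fin n) : |projB R y j| ≤ R := by
  have := norm_le_pi_norm (projB R y) j
  rw [Real.norm_eq_abs] at this
  exact this.trans (norm_projB_le hR y)

/-- Lower estimate on a component with nonpositive `y i` (case (i) signs). -/
lemma est1 (hK : 0 ≤ K) (hR : 0 ≤ R) {s : ℝ} (y : Fin n → ℝ) (i : Fin n)
    (hb1 : |b1 s| ≤ K) (hb2n : ‖b2 s‖ ≤ K) (hf2n : ∀ i j, |f2 s i j| ≤ K)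
    (hf1s : ∀ j, 0 ≤ f1 s j) (hb2s : ∀ j, b2 s j ≤ 0)
    (hf2s : ∀ j k, j ≠ k → 0 ≤ f2 s j k) (hyi : y i ≤ 0) :
    -(Ffield R b1 b2 f1 f2 s y i) ≤
      K * (n * R + n + 1) * ‖(fun j => max (-(y j)) 0 : Fin n → ℝ)‖ := by
  set u := ‖(fun j => max (-(y j)) 0 : Fin n → ℝ)‖ with hu
  have hu0 : 0 ≤ u := norm_nonneg _
  have hycomp : ∀ j, -u ≤ y j := by
    intro j
    have h1 : max (-(y j)) 0 ≤ u := by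
      have := norm_le_pi_norm (fun j => max (-(y j)) 0 : Fin n → ℝ) j
      rwa [Real.norm_eq_abs, abs_of_nonneg (le_max_right _ _)] at this
    have := le_max_left (-(y j)) 0
    linarith
  set c := min 1 (R / ‖y‖) with hc
  have hc0 : 0 ≤ c := projB_coef_nonneg hR y
  have hc1 : c ≤ 1 := projB_coef_le_one y
  have hw : ∀ j, projB R y j = c * y j := fun j => rfl
  have hwcomp : ∀ j, -u ≤ projB R y j := by
    intro j
    rcases le_or_gt 0 (y j) with h | h
    · have : 0 ≤ c * y j := mul_nonneg hc0 h
      rw [hw]; linarith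
    · rw [hw]
      have h2 : 1 * y j ≤ c * y j := mul_le_mul_of_nonpos_right hc1 h.le
      have := hycomp j
      linarith
  have hwi : projB R y i ≤ 0 := by
    rw [hw]; exact mul_nonpos_iff.2 (Or.inl ⟨hc0, hyi⟩)
  have hwiu : -u ≤ projB R y i := hwcomp i
  have hwabs : |projB R y i| ≤ u := abs_le.2 ⟨hwiu, hwi.trans hu0⟩
  have hwR : ∀ j, |projB R y j| ≤ R := abs_comp_le hR y
  have hb2j : ∀ j, |b2 s j| ≤ K := fun j => by
    have := norm_le_pi_norm (b2 s) j
    rw [Real.norm_eq_abs] at this; exact this.trans hb2n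
  -- quadratic term
  set S := ∑ j, b2 s j * projB R y j with hS
  have hSle : S ≤ n * (K * u) := by
    rw [hS]
    have : ∀ j ∈ Finset.univ, b2 s j * projB R y j ≤ K * u := by
      intro j _
      have h1 : b2 s j * projB R y j ≤ b2 s j * (-u) :=
        mul_le_mul_of_nonpos_left (hwcomp j) (hb2s j)
      have h2 : b2 s j * (-u) = (-(b2 s j)) * u := by ring
      have h3 : (-(b2 s j)) * u ≤ K * u := by
        apply mul_le_mul_of_nonneg_right _ hu0
        have := hb2j j; rw [abs_le] at this; linarith [this.1]
      linarith
    have := Finset.sum_le_card_nsmul Finset.univ _ _ this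
    simpa using this
  have hquad : -(n * (K * u) * R) ≤ S * projB R y i := by
    rcases le_or_gt S 0 with hS0 | hS0
    · have h1 : 0 ≤ S * projB R y i := mul_nonneg_iff.2 (Or.inr ⟨hS0, hwi⟩)
      have h2 : 0 ≤ n * (K * u) * R := by positivity
      linarith
    · have h1 : S * (-R) ≤ S * projB R y i := by
        apply mul_le_mul_of_nonneg_left _ hS0.le
        have := (abs_le.1 (hwR i)).1; linarith
      have h2 : S * R ≤ n * (K * u) * R := mul_le_mul_of_nonneg_right hSle hR
      nlinarith
  -- linear matrix term
  have hlin : -(n * (K * u)) ≤ ∑ j, f2 s i j * projB R y j := by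
    have hterm : ∀ j ∈ Finset.univ, -(K * u) ≤ f2 s i j * projB R y j := by
      intro j _
      rcases eq_or_ne j i with rfl | hne
      · have h1 : |f2 s j j * projB R y j| ≤ K * u := by
          rw [abs_mul]
          exact mul_le_mul (hf2n j j) hwabs (abs_nonneg _) hK
        linarith [neg_abs_le (f2 s j j * projB R y j), h1]
      · have hf2nn : 0 ≤ f2 s i j := hf2s i j (Ne.symm hne)
        have h1 : f2 s i j * (-u) ≤ f2 s i j * projB R y j :=
          mul_le_mul_of_nonneg_left (hwcomp j) hf2nn
        have h2 : -(K * u) ≤ f2 s i j * (-u) := by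
          have : f2 s i j * u ≤ K * u :=
            mul_le_mul_of_nonneg_right ((le_abs_self _).trans (hf2n i j)) hu0
          linarith
        linarith
    have := Finset.card_nsmul_le_sum Finset.univ _ _ hterm
    simpa [mul_comm] using this
  -- b1 term
  have hb1t : -(K * u) ≤ b1 s * projB R y i := by
    have h1 : |b1 s * projB R y i| ≤ K * u := by
      rw [abs_mul]; exact mul_le_mul hb1 hwabs (abs_nonneg _) hK
    linarith [neg_abs_le (b1 s * projB R y i), h1]
  have hf1t : 0 ≤ f1 s i := hf1s i
  rw [Ffield_apply]
  have hfinal : K * (n * R + n + 1) * u = n * (K * u) * R + n * (K * u) + K * u := by ring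
  rw [← hu] at *
  linarith [hquad, hlin, hb1t, hf1t]

/-- Upper estimate on a component when `y ≥ 0` (case (i) signs). -/
lemma est2 (hK : 0 ≤ K) (hR : 0 ≤ R) {s : ℝ} (y : Fin n → ℝ) (i : Fin n)
    (hb1 : |b1 s| ≤ K) (hf2n : ∀ i j, |f2 s i j| ≤ K) (hf1n : ‖f1 s‖ ≤ K)
    (hb2s : ∀ j, b2 s j ≤ 0) (hy : ∀ j, 0 ≤ y j) :
    Ffield R b1 b2 f1 f2 s y i ≤ K + (n + 1) * K * ‖y‖ := by
  set c := min 1 (R / ‖y‖) with hc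
  have hc0 : 0 ≤ c := projB_coef_nonneg hR y
  have hc1 : c ≤ 1 := projB_coef_le_one y
  have hw : ∀ j, projB R y j = c * y j := fun j => rfl
  have hw0 : ∀ j, 0 ≤ projB R y j := fun j => by rw [hw]; exact mul_nonneg hc0 (hy j)
  have hwle : ∀ j, projB R y j ≤ ‖y‖ := by
    intro j
    have h1 : |projB R y j| ≤ ‖projB R y‖ := by
      have := norm_le_pi_norm (projB R y) j; rwa [Real.norm_eq_abs] at this
    have h2 := norm_projB_le_norm hR y
    calc projB R y j ≤ |projB R y j| := le_abs_self _
      _ ≤ ‖y‖ := h1.trans h2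
  have hquad : (∑ j, b2 s j * projB R y j) * projB R y i ≤ 0 := by
    apply mul_nonpos_iff.2 (Or.inr ⟨?_, hw0 i⟩)
    apply Finset.sum_nonpos
    intro j _
    exact mul_nonpos_iff.2 (Or.inr ⟨hb2s j, hw0 j⟩)
  have hlin : ∑ j, f2 s i j * projB R y j ≤ n * (K * ‖y‖) := by
    have hterm : ∀ j ∈ Finset.univ, f2 s i j * projB R y j ≤ K * ‖y‖ := by
      intro j _
      calc f2 s i j * projB R y j ≤ |f2 s i j| * projB R y j :=
            mul_le_mul_of_nonneg_right (le_abs_self _) (hw0 j)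
        _ ≤ K * ‖y‖ := mul_le_mul (hf2n i j) (hwle j) (hw0 j) hK
    have := Finset.sum_le_card_nsmul Finset.univ _ _ hterm
    simpa using this
  have hb1t : b1 s * projB R y i ≤ K * ‖y‖ := by
    calc b1 s * projB R y i ≤ |b1 s * projB R y i| := le_abs_self _
      _ = |b1 s| * |projB R y i| := abs_mul _ _
      _ ≤ K * ‖y‖ := by
          apply mul_le_mul hb1 _ (abs_nonneg _) hK
          rw [abs_of_nonneg (hw0 i)]; exact hwle i
  have hf1t : f1 s i ≤ K := by
    have := norm_le_pi_norm (f1 s) i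
    rw [Real.norm_eq_abs] at this
    exact (le_abs_self _).trans (this.trans hf1n)
  rw [Ffield_apply]
  nlinarith [hquad, hlin, hb1t, hf1t]



variable {T K R : ℝ} {b1 : ℝ → ℝ} {b2 f1 : ℝ → Fin n → ℝ}
  {f2 : ℝ → Matrix (Fin n) (Fin n) ℝ}

lemma abs_add3 (a b c : ℝ) : |a + b + c| ≤ |a| + |b| + |c| := by
  have h1 := abs_add_le (a + b) c
  have h2 := abs_add_le a b
  linarith

lemma abs_add4 (a b c d : ℝ) : |a + b + c + d| ≤ |a| + |b| + |c| + |d| := by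
  have h1 := abs_add_le (a + b + c) d
  have h2 := abs_add3 a b c
  linarith

lemma abs_pi_le {v : Fin n → ℝ} (j : Fin n) : |v j| ≤ ‖v‖ := by
  have := norm_le_pi_norm v j; rwa [Real.norm_eq_abs] at this

lemma Ffield_bdd (hK : 0 ≤ K) (hR : 0 ≤ R) {s : ℝ}
    (hb1 : |b1 s| ≤ K) (hb2n : ‖b2 s‖ ≤ K) (hf1n : ‖f1 s‖ ≤ K)
    (hf2n : ∀ i j, |f2 s i j| ≤ K) (y : Fin n → ℝ) :
    ‖Ffield R b1 b2 f1 f2 s y‖ ≤ K * (n * R * R + n * R + R + 1) := by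
  have hRHS : (0:ℝ) ≤ K * (n * R * R + n * R + R + 1) := by positivity
  rw [pi_norm_le_iff_of_nonneg hRHS]
  intro i
  rw [Real.norm_eq_abs, Ffield_apply]
  have hS : |∑ j, b2 s j * projB R y j| ≤ n * (K * R) := by
    apply absSum; intro j
    rw [abs_mul]
    exact mul_le_mul ((abs_pi_le j).trans hb2n) (abs_comp_le hR y j) (abs_nonneg _) hK
  have hlin : |∑ j, f2 s i j * projB R y j| ≤ n * (K * R) := by
    apply absSum; intro j
    rw [abs_mul]
    exact mul_le_mul (hf2n i j) (abs_comp_le hR y j) (abs_nonneg _) hK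
  have h1 : |(∑ j, b2 s j * projB R y j) * projB R y i| ≤ n * (K * R) * R := by
    rw [abs_mul]
    exact mul_le_mul hS (abs_comp_le hR y i) (abs_nonneg _) (by positivity)
  have h2 : |b1 s * projB R y i| ≤ K * R := by
    rw [abs_mul]
    exact mul_le_mul hb1 (abs_comp_le hR y i) (abs_nonneg _) hK
  have h3 : |f1 s i| ≤ K := (abs_pi_le i).trans hf1n
  calc |(∑ j, b2 s j * projB R y j) * projB R y i + (∑ j, f2 s i j * projB R y j)
        + b1 s * projB R y i + f1 s i|
      ≤ |(∑ j, b2 s j * projB R y j) * projB R y i| + |∑ j, f2 s i j * projB R y j|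
        + |b1 s * projB R y i| + |f1 s i| := abs_add4 _ _ _ _
    _ ≤ n * (K * R) * R + n * (K * R) + K * R + K := by gcongr
    _ = K * (n * R * R + n * R + R + 1) := by ring

lemma Gfield_bdd (hK : 0 ≤ K) (hR : 0 ≤ R)
    (hb1 : ∀ t ∈ Icc (0:ℝ) T, |b1 t| ≤ K) (hb2n : ∀ t ∈ Icc (0:ℝ) T, ‖b2 t‖ ≤ K)
    (hf1n : ∀ t ∈ Icc (0:ℝ) T, ‖f1 t‖ ≤ K)
    (hf2n : ∀ t ∈ Icc (0:ℝ) T, ∀ i j, |f2 t i j| ≤ K) (s : ℝ) (y : Fin n → ℝ) :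
    ‖Gfield T R b1 b2 f1 f2 s y‖ ≤ K * (n * R * R + n * R + R + 1) := by
  rw [Gfield]
  split_ifs with h
  · exact Ffield_bdd hK hR (hb1 s h) (hb2n s h) (hf1n s h) (hf2n s h) y
  · simp; positivity

lemma Ffield_lip (hK : 0 ≤ K) (hR : 0 ≤ R) {s : ℝ}
    (hb1 : |b1 s| ≤ K) (hb2n : ‖b2 s‖ ≤ K)
    (hf2n : ∀ i j, |f2 s i j| ≤ K) (y z : Fin n → ℝ) :
    ‖Ffield R b1 b2 f1 f2 s y - Ffield R b1 b2 f1 f2 s z‖ ≤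
      K * (4 * n * R + 2 * n + 2) * ‖y - z‖ := by
  set w := projB R y with hwdef
  set v := projB R z with hvdef
  set D := ‖y - z‖ with hD
  have hD0 : 0 ≤ D := norm_nonneg _
  have hwv : ‖w - v‖ ≤ 2 * D := projB_lip hR y z
  have hcomp : ∀ j, |w j - v j| ≤ 2 * D := by
    intro j
    have : |(w - v) j| ≤ ‖w - v‖ := abs_pi_le j
    simpa using this.trans hwv
  have hRHS : (0:ℝ) ≤ K * (4 * n * R + 2 * n + 2) * D := by positivity
  rw [pi_norm_le_iff_of_nonneg hRHS]
  intro i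
  rw [Real.norm_eq_abs]
  have he : (Ffield R b1 b2 f1 f2 s y - Ffield R b1 b2 f1 f2 s z) i =
      ((∑ j, b2 s j * w j) * w i - (∑ j, b2 s j * v j) * v i)
      + (∑ j, f2 s i j * (w j - v j)) + b1 s * (w i - v i) := by
    simp only [Pi.sub_apply, Ffield_apply, ← hwdef, ← hvdef]
    rw [Finset.sum_congr rfl (fun j _ => mul_sub (f2 s i j) (w j) (v j)), Finset.sum_sub_distrib]
    ring
  have hb2j : ∀ j, |b2 s j| ≤ K := fun j => (abs_pi_le j).trans hb2n
  have hSw : |∑ j, b2 s j * w j| ≤ n * (K * R) := by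
    apply absSum; intro j; rw [abs_mul]
    exact mul_le_mul (hb2j j) (abs_comp_le hR y j) (abs_nonneg _) hK
  have hSd : |∑ j, b2 s j * w j - ∑ j, b2 s j * v j| ≤ n * (K * (2 * D)) := by
    rw [← Finset.sum_sub_distrib]
    apply absSum; intro j
    rw [← mul_sub, abs_mul]
    exact mul_le_mul (hb2j j) (hcomp j) (abs_nonneg _) hK
  have hq : |(∑ j, b2 s j * w j) * w i - (∑ j, b2 s j * v j) * v i| ≤
      n * (K * R) * (2 * D) + n * (K * (2 * D)) * R := by
    have hid : (∑ j, b2 s j * w j) * w i - (∑ j, b2 s j * v j) * v i =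
        (∑ j, b2 s j * w j) * (w i - v i)
        + (∑ j, b2 s j * w j - ∑ j, b2 s j * v j) * v i := by ring
    rw [hid]
    calc _ ≤ |(∑ j, b2 s j * w j) * (w i - v i)|
          + |(∑ j, b2 s j * w j - ∑ j, b2 s j * v j) * v i| := abs_add_le _ _
      _ ≤ n * (K * R) * (2 * D) + n * (K * (2 * D)) * R := by
          rw [abs_mul, abs_mul]
          exact add_le_add
            (mul_le_mul hSw (hcomp i) (abs_nonneg _) (by positivity))
            (mul_le_mul hSd (abs_comp_le hR z i) (abs_nonneg _) (by positivity))
  have hl : |∑ j, f2 s i j * (w j - v j)| ≤ n * (K * (2 * D)) := by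
    apply absSum; intro j; rw [abs_mul]
    exact mul_le_mul (hf2n i j) (hcomp j) (abs_nonneg _) hK
  have hb : |b1 s * (w i - v i)| ≤ K * (2 * D) := by
    rw [abs_mul]; exact mul_le_mul hb1 (hcomp i) (abs_nonneg _) hK
  rw [he]
  calc |(∑ j, b2 s j * w j) * w i - (∑ j, b2 s j * v j) * v i
        + (∑ j, f2 s i j * (w j - v j)) + b1 s * (w i - v i)|
      ≤ |(∑ j, b2 s j * w j) * w i - (∑ j, b2 s j * v j) * v i|
        + |∑ j, f2 s i j * (w j - v j)| + |b1 s * (w i - v i)| := abs_add3 _ _ _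
    _ ≤ (n * (K * R) * (2 * D) + n * (K * (2 * D)) * R) + n * (K * (2 * D)) + K * (2 * D) := by
        gcongr
    _ = K * (4 * n * R + 2 * n + 2) * D := by ring

lemma Gfield_lip (hK : 0 ≤ K) (hR : 0 ≤ R)
    (hb1 : ∀ t ∈ Icc (0:ℝ) T, |b1 t| ≤ K) (hb2n : ∀ t ∈ Icc (0:ℝ) T, ‖b2 t‖ ≤ K)
    (hf2n : ∀ t ∈ Icc (0:ℝ) T, ∀ i j, |f2 t i j| ≤ K) (s : ℝ) (y z : Fin n → ℝ) :
    ‖Gfield T R b1 b2 f1 f2 s y - Gfield T R b1 b2 f1 f2 s z‖ ≤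
      K * (4 * n * R + 2 * n + 2) * ‖y - z‖ := by
  rw [Gfield, Gfield]
  split_ifs with h
  · exact Ffield_lip hK hR (hb1 s h) (hb2n s h) (hf2n s h) y z
  · simp; positivity

lemma Gfield_meas (hR : 0 ≤ R) (mb1 : Measurable b1) (mb2 : Measurable b2)
    (mf1 : Measurable f1) (mf2 : ∀ i j, Measurable fun t => f2 t i j)
    {P : ℝ → Fin n → ℝ} (hP : Continuous P) :
    Measurable fun s => Gfield T R b1 b2 f1 f2 s (P s) := by
  have hproj : Continuous fun s => projB R (P s) := ((projB_lipschitzWith hR).continuous).comp hP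
  have hprojj : ∀ j, Measurable fun s => projB R (P s) j := fun j =>
    ((continuous_apply j).comp hproj).measurable
  apply measurable_pi_lambda
  intro i
  have : (fun s => Gfield T R b1 b2 f1 f2 s (P s) i) = fun s =>
      if s ∈ Icc (0:ℝ) T then
        ((∑ j, b2 s j * projB R (P s) j) * projB R (P s) i
          + (∑ j, f2 s i j * projB R (P s) j) + b1 s * projB R (P s) i + f1 s i)
      else 0 := by
    funext s
    rw [Gfield]
    split_ifs with h
    · exact Ffield_apply s (P s) i
    · simp
  rw [this]
  apply Measurable.ite measurableSet_Icc _ measurable_const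
  have hb2m : ∀ j, Measurable fun s => b2 s j := fun j => (measurable_pi_apply j).comp mb2
  have hf1m : ∀ j, Measurable fun s => f1 s j := fun j => (measurable_pi_apply j).comp mf1
  apply Measurable.add
  apply Measurable.add
  apply Measurable.add
  · exact (Finset.measurable_sum _ fun j _ => (hb2m j).mul (hprojj j)).mul (hprojj i)
  · exact Finset.measurable_sum _ fun j _ => (mf2 i j).mul (hprojj j)
  · exact mb1.mul (hprojj i)
  · exact hf1m i



lemma exists_fixed {n : ℕ} {T : ℝ} (hT : 0 < T) (G : ℝ → (Fin n → ℝ) → Fin n → ℝ)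
    (h1 : Fin n → ℝ) (BF L : ℝ) (hL : 0 ≤ L)
    (Gmeas : ∀ P : ℝ → Fin n → ℝ, Continuous P → Measurable fun s => G s (P s))
    (Gbdd : ∀ s y, ‖G s y‖ ≤ BF)
    (Glip : ∀ s y z, ‖G s y - G s z‖ ≤ L * ‖y - z‖) :
    ∃ P : ℝ → Fin n → ℝ, Continuous P ∧
      ∀ t ∈ Icc (0:ℝ) T, P t = h1 + ∫ s in t..T, G s (P s) := by
  haveI : CompactSpace (Icc (0:ℝ) T) := isCompact_iff_compactSpace.mp isCompact_Icc
  haveI : Nonempty (Icc (0:ℝ) T) := ⟨⟨0, ⟨le_refl _, hT.le⟩⟩⟩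
  set X := C(Icc (0:ℝ) T, Fin n → ℝ)
  let ext : X → ℝ → (Fin n → ℝ) := fun φ s => φ (projIcc 0 T hT.le s)
  have extc : ∀ φ : X, Continuous (ext φ) := fun φ => φ.continuous.comp continuous_projIcc
  have extmem : ∀ (φ : X) (x : Icc (0:ℝ) T), ext φ x = φ x := fun φ x => by
    simp only [ext, projIcc_val]
  have gmeas : ∀ φ : X, Measurable fun s => G s (ext φ s) := fun φ => Gmeas _ (extc φ)
  have gint : ∀ (φ : X) (a b : ℝ), IntervalIntegrable (fun s => G s (ext φ s)) volume a b :=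
    fun φ a b => intInt (gmeas φ) (fun s => Gbdd s _) a b
  have Φcont : ∀ φ : X, Continuous fun x : Icc (0:ℝ) T =>
      h1 + ∫ s in (x:ℝ)..T, G s (ext φ s) := by
    intro φ
    have h2 : Continuous fun t : ℝ => ∫ s in T..t, G s (ext φ s) :=
      intervalIntegral.continuous_primitive (fun a b => gint φ a b) T
    have h3 : (fun x : Icc (0:ℝ) T => h1 + ∫ s in (x:ℝ)..T, G s (ext φ s)) =
        fun x : Icc (0:ℝ) T => h1 + -(∫ s in T..(x:ℝ), G s (ext φ s)) := by
      funext x; rw [intervalIntegral.integral_symm]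
    rw [h3]
    exact continuous_const.add ((h2.comp continuous_subtype_val).neg)
  let Φ : X → X := fun φ => ⟨fun x => h1 + ∫ s in (x:ℝ)..T, G s (ext φ s), Φcont φ⟩
  -- one-step estimate
  have step : ∀ (φ ψ : X) (m : ℕ) (D : ℝ), 0 ≤ D →
      (∀ x : Icc (0:ℝ) T, dist (φ x) (ψ x) ≤ (L * (T - (x:ℝ))) ^ m / (Nat.factorial m) * D) →
      ∀ x : Icc (0:ℝ) T, dist (Φ φ x) (Φ ψ x) ≤
        (L * (T - (x:ℝ))) ^ (m+1) / (Nat.factorial (m+1)) * D := by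
    intro φ ψ m D hD hyp x
    have hxT : (x:ℝ) ≤ T := x.2.2
    have hx0 : (0:ℝ) ≤ (x:ℝ) := x.2.1
    have hsub : (Φ φ x) - (Φ ψ x) = ∫ s in (x:ℝ)..T, (G s (ext φ s) - G s (ext ψ s)) := by
      show (h1 + ∫ s in (x:ℝ)..T, G s (ext φ s)) - (h1 + ∫ s in (x:ℝ)..T, G s (ext ψ s)) = _
      rw [intervalIntegral.integral_sub (gint φ _ _) (gint ψ _ _)]
      abel
    rw [dist_eq_norm, hsub]
    calc ‖∫ s in (x:ℝ)..T, (G s (ext φ s) - G s (ext ψ s))‖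
        ≤ ∫ s in (x:ℝ)..T, ‖G s (ext φ s) - G s (ext ψ s)‖ :=
          intervalIntegral.norm_integral_le_integral_norm hxT
      _ ≤ ∫ s in (x:ℝ)..T, L * ((L * (T - s)) ^ m / (Nat.factorial m) * D) := by
          apply intervalIntegral.integral_mono_on hxT
          · exact ((gint φ _ _).sub (gint ψ _ _)).norm
          · exact (continuous_const.mul (((continuous_const.mul
              (continuous_const.sub continuous_id)).pow m).div_const _ |>.mul
              continuous_const)).intervalIntegrable _ _
          · intro s hs
            have hs0T : s ∈ Icc (0:ℝ) T := ⟨hx0.trans hs.1, hs.2⟩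
            have h5 : ‖G s (ext φ s) - G s (ext ψ s)‖ ≤ L * ‖ext φ s - ext ψ s‖ :=
              Glip s _ _
            have h6 : ‖ext φ s - ext ψ s‖ ≤ (L * (T - s)) ^ m / (Nat.factorial m) * D := by
              have h7 := hyp (projIcc 0 T hT.le s)
              rw [← dist_eq_norm]
              have h8 : ((projIcc 0 T hT.le s : Icc (0:ℝ) T) : ℝ) = s := by
                rw [projIcc_of_mem hT.le hs0T]
              rw [h8] at h7
              exact h7
            calc ‖G s (ext φ s) - G s (ext ψ s)‖ ≤ L * ‖ext φ s - ext ψ s‖ := h5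
              _ ≤ L * ((L * (T - s)) ^ m / (Nat.factorial m) * D) :=
                  mul_le_mul_of_nonneg_left h6 hL
      _ = (L * (T - (x:ℝ))) ^ (m+1) / (Nat.factorial (m+1)) * D := key_int L D m _ T
  -- iterate estimate
  have iter : ∀ (m : ℕ) (φ ψ : X) (x : Icc (0:ℝ) T),
      dist ((Φ^[m]) φ x) ((Φ^[m]) ψ x) ≤
        (L * (T - (x:ℝ))) ^ m / (Nat.factorial m) * dist φ ψ := by
    intro m
    induction m with
    | zero => intro φ ψ x; simpa using ContinuousMap.dist_apply_le_dist x
    | succ m ih =>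
      intro φ ψ x
      have := step ((Φ^[m]) φ) ((Φ^[m]) ψ) m (dist φ ψ) dist_nonneg (ih φ ψ) x
      rw [Function.iterate_succ_apply', Function.iterate_succ_apply']
      exact this
  have dist_iter : ∀ (m : ℕ) (φ ψ : X),
      dist ((Φ^[m]) φ) ((Φ^[m]) ψ) ≤ (L * T) ^ m / (Nat.factorial m) * dist φ ψ := by
    intro m φ ψ
    have hq0 : (0:ℝ) ≤ (L * T) ^ m / (Nat.factorial m) * dist φ ψ := by
      have := dist_nonneg (x := φ) (y := ψ)
      have h2 : (0:ℝ) ≤ (L * T) ^ m := pow_nonneg (mul_nonneg hL hT.le) m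
      positivity
    rw [ContinuousMap.dist_le hq0]
    intro x
    refine (iter m φ ψ x).trans ?_
    have h1 : (L * (T - (x:ℝ))) ^ m ≤ (L * T) ^ m := by
      apply pow_le_pow_left₀ (mul_nonneg hL (sub_nonneg.2 x.2.2))
      have := x.2.1
      nlinarith
    have h2 : (0:ℝ) < (Nat.factorial m : ℝ) := by
      exact_mod_cast Nat.factorial_pos m
    gcongr
  obtain ⟨m, hm⟩ : ∃ m : ℕ, (L * T) ^ m / (Nat.factorial m) < 1 := by
    have := FloorSemiring.tendsto_pow_div_factorial_atTop (K := ℝ) (L * T)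
    exact ((this.eventually (gt_mem_nhds (by norm_num : (0:ℝ) < 1))).exists)
  have hq0 : (0:ℝ) ≤ (L * T) ^ m / (Nat.factorial m) := by
    have h2 : (0:ℝ) ≤ (L * T) ^ m := pow_nonneg (mul_nonneg hL hT.le) m
    positivity
  have hC : ContractingWith ((L * T) ^ m / (Nat.factorial m)).toNNReal (Φ^[m]) := by
    constructor
    · exact_mod_cast Real.toNNReal_lt_one.2 hm
    · apply LipschitzWith.of_dist_le_mul
      intro φ ψ
      rw [Real.coe_toNNReal _ hq0]
      exact dist_iter m φ ψ
  set φstar := ContractingWith.fixedPoint (Φ^[m]) hC with hφstar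
  have hfix : Φ φstar = φstar := ContractingWith.isFixedPt_fixedPoint_iterate hC
  refine ⟨ext φstar, extc φstar, ?_⟩
  intro t ht
  have h9 : Φ φstar ⟨t, ht⟩ = φstar ⟨t, ht⟩ := by rw [hfix]
  have h10 : ext φstar t = φstar ⟨t, ht⟩ := by
    simp only [ext, projIcc_of_mem hT.le ht]
  rw [h10, ← h9]
  rfl



variable {n : ℕ}

variable {T K R : ℝ} {b1 : ℝ → ℝ} {b2 f1 : ℝ → Fin n → ℝ}
  {f2 : ℝ → Matrix (Fin n) (Fin n) ℝ} {h1 : Fin n → ℝ}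

lemma apriori (hT : 0 < T) (hK : 0 < K) (hR : 0 ≤ R)
    (Bb1 : ∀ t ∈ Icc (0:ℝ) T, |b1 t| ≤ K) (Bb2 : ∀ t ∈ Icc (0:ℝ) T, ‖b2 t‖ ≤ K)
    (Bf1 : ∀ t ∈ Icc (0:ℝ) T, ‖f1 t‖ ≤ K) (Bf2 : ∀ t ∈ Icc (0:ℝ) T, ∀ i j, |f2 t i j| ≤ K)
    (sgn : ∀ t ∈ Icc (0:ℝ) T, (∀ i, 0 ≤ f1 t i) ∧ (∀ i, b2 t i ≤ 0) ∧
      ∀ i j, i ≠ j → 0 ≤ f2 t i j)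
    (hh1 : ∀ i, 0 ≤ h1 i) (Bh1 : ‖h1‖ ≤ K)
    {P : ℝ → Fin n → ℝ} (hPc : Continuous P)
    (hmeas : Measurable fun s => Gfield T R b1 b2 f1 f2 s (P s))
    {BF : ℝ} (hbdd : ∀ s, ‖Gfield T R b1 b2 f1 f2 s (P s)‖ ≤ BF)
    (hP : ∀ t ∈ Icc (0:ℝ) T, P t = h1 + ∫ s in t..T, Gfield T R b1 b2 f1 f2 s (P s)) :
    ∀ t ∈ Icc (0:ℝ) T, ‖P t‖ ≤ (K + K * T) * Real.exp ((n + 1) * K * T) := by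
  set g : ℝ → Fin n → ℝ := fun s => Gfield T R b1 b2 f1 f2 s (P s) with hg
  have hint : ∀ a b : ℝ, IntervalIntegrable g volume a b := intInt hmeas hbdd
  have hii : ∀ (i : Fin n) (a b : ℝ), IntervalIntegrable (fun s => g s i) volume a b :=
    fun i a b => intIntR ((measurable_pi_apply i).comp hmeas)
      (fun s => (abs_pi_le i).trans (hbdd s)) a b
  have hPT : P T = h1 := by
    have := hP T ⟨hT.le, le_refl T⟩
    simpa [intervalIntegral.integral_same] using this
  have hPapp : ∀ t ∈ Icc (0:ℝ) T, ∀ i, P t i = h1 i + ∫ s in t..T, g s i := by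
    intro t ht i
    have := congrFun (hP t ht) i
    rwa [Pi.add_apply, intervalIntegral_apply (hint t T) i] at this
  have hdiff : ∀ t ∈ Icc (0:ℝ) T, ∀ t1 ∈ Icc (0:ℝ) T, ∀ i,
      P t i - P t1 i = ∫ s in t..t1, g s i := by
    intro t ht t1 ht1 i
    have e1 := hPapp t ht i
    have e2 := hPapp t1 ht1 i
    have e3 := intervalIntegral.integral_add_adjacent_intervals (hii i t t1) (hii i t1 T)
    linarith
  -- nonnegativity of P
  set u : ℝ → ℝ := fun t => ‖(fun j => max (-(P t j)) 0 : Fin n → ℝ)‖ with hu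
  have huc : Continuous u := by
    apply Continuous.norm
    exact continuous_pi fun j => (((continuous_apply j).comp hPc).neg).max continuous_const
  have hu0 : ∀ t, 0 ≤ u t := fun t => norm_nonneg _
  have hL2 : (0:ℝ) ≤ K * (n * R + n + 1) := by positivity
  set L2 := K * (n * R + n + 1) with hL2def
  have claimU : ∀ t ∈ Icc (0:ℝ) T, u t ≤ 0 + ∫ s in t..T, L2 * u s := by
    intro t ht
    rw [zero_add]
    have hA0 : 0 ≤ ∫ s in t..T, L2 * u s :=
      intervalIntegral.integral_nonneg ht.2 (fun s _ => mul_nonneg hL2 (hu0 s))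
    rw [hu]
    rw [pi_norm_le_iff_of_nonneg hA0]
    intro i
    rw [Real.norm_eq_abs, abs_of_nonneg (le_max_right _ _)]
    rcases le_or_gt 0 (P t i) with hpos | hneg
    · exact max_le (by linarith) hA0
    · -- first zero after t
      set SS : Set ℝ := Icc t T ∩ {s | P s i = 0} with hSS
      have hSne : SS.Nonempty := by
        have hctsOn : ContinuousOn (fun s => P s i) (Icc t T) :=
          ((continuous_apply i).comp hPc).continuousOn
        have h0mem : (0:ℝ) ∈ Icc (P t i) (P T i) := by
          constructor
          · exact hneg.le
          · rw [hPT]; exact hh1 i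
        obtain ⟨r, hr1, hr2⟩ := intermediate_value_Icc ht.2 hctsOn h0mem
        exact ⟨r, hr1, hr2⟩
      have hScl : IsClosed SS := IsClosed.inter isClosed_Icc
        (isClosed_eq ((continuous_apply i).comp hPc) continuous_const)
      have hSbdd : BddBelow SS := ⟨t, fun s hs => hs.1.1⟩
      set t1 := sInf SS with ht1def
      have ht1S : t1 ∈ SS := hScl.csInf_mem hSne hSbdd
      have htt1 : t ≤ t1 := ht1S.1.1
      have ht1T : t1 ≤ T := ht1S.1.2
      have ht10 : P t1 i = 0 := ht1S.2
      have ht1Icc : t1 ∈ Icc (0:ℝ) T := ⟨ht.1.trans htt1, ht1T⟩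
      have hnonpos : ∀ s ∈ Icc t t1, P s i ≤ 0 := by
        intro s hs
        by_contra hc
        push_neg at hc
        have hst1 : s ≠ t1 := fun h => by rw [h, ht10] at hc; exact lt_irrefl 0 hc
        have hctsOn : ContinuousOn (fun r => P r i) (Icc t s) :=
          ((continuous_apply i).comp hPc).continuousOn
        have h0mem : (0:ℝ) ∈ Icc (P t i) (P s i) := ⟨hneg.le, hc.le⟩
        obtain ⟨r, hr1, hr2⟩ := intermediate_value_Icc hs.1 hctsOn h0mem
        have hrS : r ∈ SS := by
          refine ⟨⟨hr1.1, ?_⟩, hr2⟩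
          exact hr1.2.trans (hs.2.trans ht1T)
        have := csInf_le hSbdd hrS
        have hslt : s < t1 := lt_of_le_of_ne hs.2 hst1
        rw [← ht1def] at this
        linarith [hr1.2]
      have hkey : -(P t i) ≤ ∫ s in t..t1, L2 * u s := by
        have hd := hdiff t ht t1 ht1Icc i
        rw [ht10, sub_zero] at hd
        have hneg_int : -(P t i) = ∫ s in t..t1, -(g s i) := by
          rw [intervalIntegral.integral_neg, ← hd]
        rw [hneg_int]
        apply intervalIntegral.integral_mono_on htt1 ((hii i t t1).neg)
        · exact (continuous_const.mul huc).intervalIntegrable _ _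
        · intro s hs
          have hs0T : s ∈ Icc (0:ℝ) T := ⟨ht.1.trans hs.1, hs.2.trans ht1T⟩
          show -(g s i) ≤ L2 * u s
          have hgF : g s i = Ffield R b1 b2 f1 f2 s (P s) i := by
            rw [hg]; simp only [Gfield, if_pos hs0T]
          rw [hgF]
          exact est1 (n := n) hK.le hR (P s) i (Bb1 s hs0T) (Bb2 s hs0T) (Bf2 s hs0T)
            (sgn s hs0T).1 (sgn s hs0T).2.1 (sgn s hs0T).2.2 (hnonpos s hs)
      have hext : ∫ s in t..t1, L2 * u s ≤ ∫ s in t..T, L2 * u s := by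
        have e3 := intervalIntegral.integral_add_adjacent_intervals
          (a := t) (b := t1) (c := T) (μ := volume) (f := fun s => L2 * u s)
          ((continuous_const.mul huc).intervalIntegrable _ _)
          ((continuous_const.mul huc).intervalIntegrable _ _)
        have hpos2 : 0 ≤ ∫ s in t1..T, L2 * u s :=
          intervalIntegral.integral_nonneg ht1T (fun s _ => mul_nonneg hL2 (hu0 s))
        linarith
      exact max_le (hkey.trans hext) hA0
  have hU0 : ∀ t ∈ Icc (0:ℝ) T, u t = 0 := by
    intro t ht
    have := gronwall hT.le hL2 le_rfl huc.continuousOn claimU t ht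
    simp only [zero_mul] at this
    exact le_antisymm this (hu0 t)
  have hPos : ∀ t ∈ Icc (0:ℝ) T, ∀ i, 0 ≤ P t i := by
    intro t ht i
    have h1' : max (-(P t i)) 0 ≤ u t := by
      have := abs_pi_le (v := (fun j => max (-(P t j)) 0 : Fin n → ℝ)) i
      rwa [abs_of_nonneg (le_max_right _ _)] at this
    rw [hU0 t ht] at h1'
    have := le_max_left (-(P t i)) 0
    linarith
  -- upper bound
  set v : ℝ → ℝ := fun t => ‖P t‖ with hv
  have hvc : Continuous v := hPc.norm
  have hv0 : ∀ t, 0 ≤ v t := fun t => norm_nonneg _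
  have hL1 : (0:ℝ) ≤ (n + 1) * K := by positivity
  have claimV : ∀ t ∈ Icc (0:ℝ) T, v t ≤ (K + K * T) + ∫ s in t..T, ((n + 1) * K) * v s := by
    intro t ht
    have hA0 : 0 ≤ ∫ s in t..T, ((n+1) * K) * v s :=
      intervalIntegral.integral_nonneg ht.2 (fun s _ => mul_nonneg hL1 (hv0 s))
    have hRHS0 : (0:ℝ) ≤ (K + K * T) + ∫ s in t..T, ((n+1) * K) * v s := by
      have : (0:ℝ) ≤ K + K * T := by positivity
      linarith
    rw [hv]
    rw [pi_norm_le_iff_of_nonneg hRHS0]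
    intro i
    rw [Real.norm_eq_abs, abs_of_nonneg (hPos t ht i)]
    have e1 := hPapp t ht i
    have hmono : ∫ s in t..T, g s i ≤ ∫ s in t..T, (K + (n+1) * K * v s) := by
      apply intervalIntegral.integral_mono_on ht.2 (hii i t T)
      · exact (continuous_const.add ((continuous_const.mul hvc))).intervalIntegrable _ _
      · intro s hs
        have hs0T : s ∈ Icc (0:ℝ) T := ⟨ht.1.trans hs.1, hs.2⟩
        show g s i ≤ K + (n+1) * K * v s
        have hgF : g s i = Ffield R b1 b2 f1 f2 s (P s) i := by
          rw [hg]; simp only [Gfield, if_pos hs0T]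
        rw [hgF]
        exact est2 (n := n) hK.le hR (P s) i (Bb1 s hs0T) (Bf2 s hs0T) (Bf1 s hs0T)
          (sgn s hs0T).2.1 (hPos s hs0T)
    have hsplit : ∫ s in t..T, (K + (n+1) * K * v s) =
        K * (T - t) + ∫ s in t..T, ((n+1) * K) * v s := by
      rw [intervalIntegral.integral_add (f := fun _ => K) (g := fun s => (n+1) * K * v s)
        (intervalIntegrable_const)
        ((continuous_const.mul hvc).intervalIntegrable _ _)]
      simp [smul_eq_mul, mul_comm]
    have hh1i : h1 i ≤ K := (le_abs_self _).trans ((abs_pi_le i).trans Bh1)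
    have hKT : K * (T - t) ≤ K * T := by
      have := ht.1
      nlinarith
    rw [e1] at *
    linarith
  intro t ht
  have := gronwall hT.le hL1 (by positivity) hvc.continuousOn claimV t ht
  calc ‖P t‖ = v t := rfl
    _ ≤ (K + K * T) * Real.exp ((n + 1) * K * T) := this


/-- Main lemma in the case (i) sign configuration. -/
lemma key {n : ℕ} {T K : ℝ} (hT : 0 < T) (hK : 0 < K)
    {b1 : ℝ → ℝ} {b2 f1 : ℝ → Fin n → ℝ} {f2 : ℝ → Matrix (Fin n) (Fin n) ℝ}
    {h1 : Fin n → ℝ}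
    (mb1 : Measurable b1) (mb2 : Measurable b2) (mf1 : Measurable f1)
    (mf2 : ∀ i j, Measurable fun t => f2 t i j)
    (Bb1 : ∀ t ∈ Icc (0:ℝ) T, |b1 t| ≤ K) (Bb2 : ∀ t ∈ Icc (0:ℝ) T, ‖b2 t‖ ≤ K)
    (Bf1 : ∀ t ∈ Icc (0:ℝ) T, ‖f1 t‖ ≤ K) (Bf2 : ∀ t ∈ Icc (0:ℝ) T, ∀ i j, |f2 t i j| ≤ K)
    (Bh1 : ‖h1‖ ≤ K)
    (sgn : ∀ t ∈ Icc (0:ℝ) T, (∀ i, 0 ≤ f1 t i) ∧ (∀ i, b2 t i ≤ 0) ∧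
      ∀ i j, i ≠ j → 0 ≤ f2 t i j)
    (hh1 : ∀ i, 0 ≤ h1 i) :
    ∃ P : ℝ → Fin n → ℝ, IsRiccatiSolution n T b1 b2 f1 f2 h1 P ∧
      (∀ Q : ℝ → Fin n → ℝ, IsRiccatiSolution n T b1 b2 f1 f2 h1 Q →
        ∀ t ∈ Icc (0:ℝ) T, Q t = P t) ∧
      ∀ t ∈ Icc (0:ℝ) T, ‖P t‖ ≤ (K + K * T) * Real.exp ((n + 1) * K * T) := by
  set R := (K + K * T) * Real.exp ((n + 1) * K * T) with hRdef
  have hR0 : 0 ≤ R := by positivity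
  -- the truncated equation, fixed point
  obtain ⟨P, hPc, hPeq⟩ :=
    exists_fixed hT (Gfield T R b1 b2 f1 f2) h1
      (K * (n * R * R + n * R + R + 1)) (K * (4 * n * R + 2 * n + 2)) (by positivity)
      (fun Q hQ => Gfield_meas hR0 mb1 mb2 mf1 mf2 hQ)
      (Gfield_bdd hK.le hR0 Bb1 Bb2 Bf1 Bf2)
      (Gfield_lip hK.le hR0 Bb1 Bb2 Bf2)
  have hbd : ∀ t ∈ Icc (0:ℝ) T, ‖P t‖ ≤ R := by
    rw [hRdef]
    exact apriori hT hK hR0 Bb1 Bb2 Bf1 Bf2 sgn hh1 Bh1 hPc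
      (Gfield_meas hR0 mb1 mb2 mf1 mf2 hPc)
      (fun s => Gfield_bdd hK.le hR0 Bb1 Bb2 Bf1 Bf2 s (P s)) hPeq
  have hsol : IsRiccatiSolution n T b1 b2 f1 f2 h1 P := by
    refine ⟨hPc.continuousOn, fun t ht => ?_⟩
    rw [hPeq t ht]
    congr 1
    apply intervalIntegral.integral_congr
    intro s hs
    rw [uIcc_of_le ht.2] at hs
    have hs0T : s ∈ Icc (0:ℝ) T := ⟨ht.1.trans hs.1, hs.2⟩
    simp only [Gfield, if_pos hs0T, Ffield]
    rw [projB_eq_of_le (hbd s hs0T)]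
  refine ⟨P, hsol, ?_, fun t ht => hbd t ht⟩
  -- uniqueness
  rintro Q ⟨hQc, hQeq⟩ t ht
  obtain ⟨MQ, hMQ⟩ := isCompact_Icc.exists_bound_of_continuousOn hQc
  set M := max MQ R with hM
  have hM0 : 0 ≤ M := le_trans hR0 (le_max_right _ _)
  have hQM : ∀ s ∈ Icc (0:ℝ) T, ‖Q s‖ ≤ M := fun s hs => (hMQ s hs).trans (le_max_left _ _)
  have hPM : ∀ s ∈ Icc (0:ℝ) T, ‖P s‖ ≤ M := fun s hs => (hbd s hs).trans (le_max_right _ _)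
  -- continuous extension of Q
  set Qe : ℝ → Fin n → ℝ := fun s => Q ((projIcc 0 T hT.le s : Icc (0:ℝ) T) : ℝ) with hQe
  have hQec : Continuous Qe := by
    have : Continuous fun x : Icc (0:ℝ) T => Q (x : ℝ) := continuousOn_iff_continuous_restrict.mp hQc
    exact this.comp continuous_projIcc
  have hQeeq : ∀ s ∈ Icc (0:ℝ) T, Qe s = Q s := by
    intro s hs; rw [hQe]; simp [projIcc_of_mem hT.le hs]
  have hQeM : ∀ s, ‖Qe s‖ ≤ M := by
    intro s
    rw [hQe]
    exact hQM _ (Subtype.coe_prop _)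
  -- both P and Qe satisfy the M-truncated equation
  set GM := Gfield T M b1 b2 f1 f2 with hGM
  have hPeqM : ∀ r ∈ Icc (0:ℝ) T, P r = h1 + ∫ s in r..T, GM s (P s) := by
    intro r hr
    rw [hPeq r hr]
    congr 1
    apply intervalIntegral.integral_congr
    intro s hs
    rw [uIcc_of_le hr.2] at hs
    have hs0T : s ∈ Icc (0:ℝ) T := ⟨hr.1.trans hs.1, hs.2⟩
    simp only [Gfield, if_pos hs0T, Ffield, hGM]
    rw [projB_eq_of_le (hbd s hs0T), projB_eq_of_le (hPM s hs0T)]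
  have hQeqM : ∀ r ∈ Icc (0:ℝ) T, Qe r = h1 + ∫ s in r..T, GM s (Qe s) := by
    intro r hr
    rw [hQeeq r hr, hQeq r hr]
    congr 1
    apply intervalIntegral.integral_congr
    intro s hs
    rw [uIcc_of_le hr.2] at hs
    have hs0T : s ∈ Icc (0:ℝ) T := ⟨hr.1.trans hs.1, hs.2⟩
    simp only [Gfield, if_pos hs0T, Ffield, hGM]
    rw [hQeeq s hs0T, projB_eq_of_le (hQM s hs0T)]
  -- Gronwall for the difference
  have hmeasP : Measurable fun s => GM s (P s) := Gfield_meas hM0 mb1 mb2 mf1 mf2 hPc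
  have hmeasQ : Measurable fun s => GM s (Qe s) := Gfield_meas hM0 mb1 mb2 mf1 mf2 hQec
  have hintP : ∀ a b : ℝ, IntervalIntegrable (fun s => GM s (P s)) volume a b :=
    intInt hmeasP (fun s => Gfield_bdd hK.le hM0 Bb1 Bb2 Bf1 Bf2 s (P s))
  have hintQ : ∀ a b : ℝ, IntervalIntegrable (fun s => GM s (Qe s)) volume a b :=
    intInt hmeasQ (fun s => Gfield_bdd hK.le hM0 Bb1 Bb2 Bf1 Bf2 s (Qe s))
  set u : ℝ → ℝ := fun s => ‖Qe s - P s‖ with hudef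
  have huc : Continuous u := (hQec.sub hPc).norm
  set LM := K * (4 * n * M + 2 * n + 2) with hLM
  have hLM0 : 0 ≤ LM := by positivity
  have claim : ∀ r ∈ Icc (0:ℝ) T, u r ≤ 0 + ∫ s in r..T, LM * u s := by
    intro r hr
    rw [zero_add]
    have hsub : Qe r - P r = ∫ s in r..T, (GM s (Qe s) - GM s (P s)) := by
      rw [hQeqM r hr, hPeqM r hr, intervalIntegral.integral_sub (hintQ r T) (hintP r T)]
      abel
    calc u r = ‖∫ s in r..T, (GM s (Qe s) - GM s (P s))‖ := by
          show ‖Qe r - P r‖ = _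
          rw [hsub]
      _ ≤ ∫ s in r..T, ‖GM s (Qe s) - GM s (P s)‖ :=
          intervalIntegral.norm_integral_le_integral_norm hr.2
      _ ≤ ∫ s in r..T, LM * u s := by
          apply intervalIntegral.integral_mono_on hr.2 ((hintQ r T).sub (hintP r T)).norm
            ((continuous_const.mul huc).intervalIntegrable _ _)
          intro s hs
          exact Gfield_lip hK.le hM0 Bb1 Bb2 Bf2 s (Qe s) (P s)
  have := gronwall hT.le hLM0 le_rfl huc.continuousOn claim t ht
  rw [zero_mul] at this
  have hzero : u t = 0 := le_antisymm this (norm_nonneg _)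
  have : Qe t = P t := by
    have := norm_eq_zero.mp hzero
    exact sub_eq_zero.mp this
  rw [← hQeeq t ht]
  exact this



lemma neg_sol {n : ℕ} {T : ℝ} {b1 : ℝ → ℝ} {b2 f1 : ℝ → Fin n → ℝ}
    {f2 : ℝ → Matrix (Fin n) (Fin n) ℝ} {h1 : Fin n → ℝ} {P : ℝ → Fin n → ℝ}
    (h : IsRiccatiSolution n T b1 b2 f1 f2 h1 P) :
    IsRiccatiSolution n T b1 (fun t => -(b2 t)) (fun t => -(f1 t)) f2 (-h1)
      (fun t => -(P t)) := by
  obtain ⟨hc, heq⟩ := h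
  refine ⟨hc.neg, fun t ht => ?_⟩
  have hfun : (fun s => ((∑ i, (fun t => -(b2 t)) s i * (fun t => -(P t)) s i) •
        (fun t => -(P t)) s + (f2 s).mulVec ((fun t => -(P t)) s)
        + b1 s • (fun t => -(P t)) s + (fun t => -(f1 t)) s)) =
      fun s => -((∑ i, b2 s i * P s i) • P s + (f2 s).mulVec (P s) + b1 s • P s + f1 s) := by
    funext s
    simp only [Pi.neg_apply, neg_mul_neg, Matrix.mulVec_neg, smul_neg, neg_add, neg_neg]
  show -(P t) = -h1 + ∫ s in t..T, _
  rw [hfun, intervalIntegral.integral_neg, heq t ht]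
  simp [neg_add]
  abel

end RiccatiAux

open RiccatiAux in
/-- Under assumptions (A1) and (A2), the Riccati terminal value problem admits
exactly one solution `P : [0,T] → ℝⁿ`, and there is a constant `C` depending only on
`n`, `K`, `T` bounding `‖P t‖` for all `t ∈ [0,T]`. -/
theorem riccati_existence_uniqueness_bound
    (n d : ℕ) (hn : 0 < n) (hd : 0 < d) (T K : ℝ) (hT : 0 < T) (hK : 0 < K) :
    ∃ C : ℝ, ∀ (b1 : ℝ → ℝ) (b2 f1 : ℝ → Fin n → ℝ) (f2 : ℝ → Matrix (Fin n) (Fin n) ℝ)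
      (s1 : ℝ → Fin d → ℝ) (s2 : ℝ → Matrix (Fin n) (Fin d) ℝ) (sg : ℝ → Fin d → ℝ)
      (h1 : Fin n → ℝ) (b0 : ℝ → ℝ → (Fin n → ℝ) → ℝ)
      (f0 : ℝ → ℝ → (Fin n → ℝ) → Fin n → ℝ)
      (s0 : ℝ → ℝ → (Fin n → ℝ) → Fin d → ℝ) (h2 : ℝ → Fin n → ℝ),
      A1 n d T K b1 b2 f1 f2 s1 s2 sg h1 b0 f0 s0 h2 →
      A2 n T b2 f1 f2 h1 →
      ∃ P : ℝ → Fin n → ℝ,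
        IsRiccatiSolution n T b1 b2 f1 f2 h1 P ∧
        (∀ Q : ℝ → Fin n → ℝ, IsRiccatiSolution n T b1 b2 f1 f2 h1 Q →
          ∀ t ∈ Icc (0 : ℝ) T, Q t = P t) ∧
        ∀ t ∈ Icc (0 : ℝ) T, ‖P t‖ ≤ C := by
  refine ⟨(K + K * T) * Real.exp ((n + 1) * K * T), ?_⟩
  intro b1 b2 f1 f2 s1 s2 sg h1 b0 f0 s0 h2 hA1 hA2
  have h0T : (0:ℝ) ∈ Icc (0:ℝ) T := ⟨le_refl _, hT.le⟩
  rcases hA2 with hcase | hcase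
  · -- case (i)
    exact key hT hK hA1.meas_b1 hA1.meas_b2 hA1.meas_f1 hA1.meas_f2
      hA1.bdd_b1 hA1.bdd_b2 hA1.bdd_f1 hA1.bdd_f2 hA1.bdd_h1
      (fun t ht => ⟨(hcase t ht).1, (hcase t ht).2.2.1, (hcase t ht).2.2.2⟩)
      (hcase 0 h0T).2.1
  · -- case (ii): apply case (i) to the negated system
    have hb2m : Measurable fun t => -(b2 t) := hA1.meas_b2.neg
    have hf1m : Measurable fun t => -(f1 t) := hA1.meas_f1.neg
    have hb2b : ∀ t ∈ Icc (0:ℝ) T, ‖-(b2 t)‖ ≤ K := fun t ht => by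
      rw [norm_neg]; exact hA1.bdd_b2 t ht
    have hf1b : ∀ t ∈ Icc (0:ℝ) T, ‖-(f1 t)‖ ≤ K := fun t ht => by
      rw [norm_neg]; exact hA1.bdd_f1 t ht
    have hh1b : ‖-h1‖ ≤ K := by rw [norm_neg]; exact hA1.bdd_h1
    obtain ⟨P', hsol', huniq', hbd'⟩ :=
      key (b2 := fun t => -(b2 t)) (f1 := fun t => -(f1 t)) (h1 := -h1) hT hK
        hA1.meas_b1 hb2m hf1m hA1.meas_f2 hA1.bdd_b1 hb2b hf1b hA1.bdd_f2 hh1b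
        (fun t ht => ⟨fun i => by simpa using (hcase t ht).1 i,
          fun i => by simpa using (hcase t ht).2.2.1 i,
          (hcase t ht).2.2.2⟩)
        (fun i => by simpa using (hcase 0 h0T).2.1 i)
    refine ⟨fun t => -(P' t), ?_, ?_, ?_⟩
    · have := neg_sol hsol'
      simpa [neg_neg] using this
    · intro Q hQ t ht
      have hQ' := neg_sol hQ
      have := huniq' (fun t => -(Q t)) hQ' t ht
      have h2' : -(Q t) = P' t := this
      have : Q t = -(P' t) := by rw [← h2', neg_neg]
      exact this
    · intro t ht
      have := hbd' t ht
      simpa [norm_neg] using this
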